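/- arXiv:1802.00220 — 3 statements merged into one kernel-verified Lean document; each statement's English description precedes it below -/
import Mathlib

section
/- Let A, B be symmetric positive definite matrices with B ≤ A ≤ B + C for a symmetric positive semidefinite C (in the Loewner order). If additionally A ≤ L for a symmetric positive definite L, then the damped iteration matrix I − τ L⁻¹ A with τ = 1 satisfies ‖A^{1/2}(I − L⁻¹A)^ν A^{−1/2}‖ ≤ 1 for every ν ∈ ℕ. -/
/-!
With `z = L⁻¹ A x` one has `(I - L⁻¹A) x = x - z` and `L z = A x`, so
`xᵀAx - (x - z)ᵀA(x - z) = 2 zᵀLz - zᵀAz = zᵀLz + zᵀ(L - A)z ≥ 0`.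
A single step of the iteration therefore does not increase the `A`-energy, and neither
does any power of it.
-/

open Matrix

namespace Matrix

theorem IsHermitian.of_posSemidef_sub {ι : Type*} {A L : Matrix ι ι ℝ} (hL : L.IsHermitian)
    (hLA : (L - A).PosSemidef) : A.IsHermitian := by
  simpa using hL.sub hLA.isHermitian

variable {ι : Type*} [Fintype ι]

theorem IsHermitian.dotProduct_mulVec_comm {A : Matrix ι ι ℝ} (hA : A.IsHermitian)
    (x y : ι → ℝ) : x ⬝ᵥ (A *ᵥ y) = y ⬝ᵥ (A *ᵥ x) := by
  have hAt : Aᵀ = A := by simpa using hA.eq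
  rw [dotProduct_mulVec, ← mulVec_transpose, hAt, dotProduct_comm]

variable [DecidableEq ι]

theorem dotProduct_mulVec_pow_le {A M : Matrix ι ι ℝ}
    (hM : ∀ x, (M *ᵥ x) ⬝ᵥ (A *ᵥ (M *ᵥ x)) ≤ x ⬝ᵥ (A *ᵥ x)) (ν : ℕ) (x : ι → ℝ) :
    ((M ^ ν) *ᵥ x) ⬝ᵥ (A *ᵥ ((M ^ ν) *ᵥ x)) ≤ x ⬝ᵥ (A *ᵥ x) := by
  induction ν generalizing x with
  | zero => simp
  | succ k ih =>
    rw [pow_succ, ← mulVec_mulVec]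
    exact (ih (M *ᵥ x)).trans (hM x)

theorem dotProduct_mulVec_one_sub_inv_mul_le {A L : Matrix ι ι ℝ} (hL : L.PosDef)
    (hLA : (L - A).PosSemidef) (x : ι → ℝ) :
    ((1 - L⁻¹ * A) *ᵥ x) ⬝ᵥ (A *ᵥ ((1 - L⁻¹ * A) *ᵥ x)) ≤ x ⬝ᵥ (A *ᵥ x) := by
  set z := L⁻¹ *ᵥ (A *ᵥ x)
  have hstep : (1 - L⁻¹ * A) *ᵥ x = x - z := by
    rw [sub_mulVec, one_mulVec, ← mulVec_mulVec]
  have hLz : L *ᵥ z = A *ᵥ x := by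
    rw [mulVec_mulVec, mul_nonsing_inv _ ((isUnit_iff_isUnit_det L).mp hL.isUnit), one_mulVec]
  have hxAz : x ⬝ᵥ (A *ᵥ z) = z ⬝ᵥ (L *ᵥ z) := by
    rw [(hL.isHermitian.of_posSemidef_sub hLA).dotProduct_mulVec_comm, hLz]
  have hLpos : 0 ≤ z ⬝ᵥ (L *ᵥ z) := by simpa using hL.posSemidef.dotProduct_mulVec_nonneg z
  have hLApos : 0 ≤ z ⬝ᵥ ((L - A) *ᵥ z) := by simpa using hLA.dotProduct_mulVec_nonneg z
  rw [sub_mulVec, dotProduct_sub] at hLApos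
  have hzAx : z ⬝ᵥ (A *ᵥ x) = z ⬝ᵥ (L *ᵥ z) := by rw [hLz]
  rw [hstep, mulVec_sub, dotProduct_sub, sub_dotProduct, sub_dotProduct]
  linarith

end Matrix

theorem stmt_6_general {n : ℕ} (A L : Matrix (Fin n) (Fin n) ℝ)
    (hL : L.PosDef) (hAL : (L - A).PosSemidef) (ν : ℕ) :
    ∀ x : Fin n → ℝ,
      (((1 - L⁻¹ * A) ^ ν) *ᵥ x) ⬝ᵥ (A *ᵥ (((1 - L⁻¹ * A) ^ ν) *ᵥ x))
        ≤ x ⬝ᵥ (A *ᵥ x) :=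
  dotProduct_mulVec_pow_le (dotProduct_mulVec_one_sub_inv_mul_le hL hAL) ν

/-- Stability of the damped (τ = 1) smoothing iteration: if `B ≤ A ≤ B + C` with
`C ⪰ 0`, and `A ≤ L` in the Loewner order, then `I − L⁻¹A` is a contraction in the
`A`-norm, i.e. `‖A^{1/2}(I − L⁻¹A)^ν A^{−1/2}‖ ≤ 1` for every `ν`, expressed
equivalently through the quadratic form of `A`. -/
theorem stmt_6 {n : ℕ} (A B C L : Matrix (Fin n) (Fin n) ℝ)
    (hA : A.PosDef) (hB : B.PosDef) (hC : C.PosSemidef) (hL : L.PosDef)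
    (hBA : (A - B).PosSemidef) (hABC : ((B + C) - A).PosSemidef)
    (hAL : (L - A).PosSemidef) (ν : ℕ) :
    ∀ x : Fin n → ℝ,
      (((1 - L⁻¹ * A) ^ ν) *ᵥ x) ⬝ᵥ (A *ᵥ (((1 - L⁻¹ * A) ^ ν) *ᵥ x))
        ≤ x ⬝ᵥ (A *ᵥ x) :=
  stmt_6_general A L hL hAL ν
end

section
/- Let B be a symmetric positive definite n×n matrix with at most N nonzero entries per row, D its diagonal, and C its strictly lower triangular part. Then every eigenvalue of D^{−1/2} C D^{−1/2} + D^{−1/2} Cᵀ D^{−1/2} is bounded in absolute value by N, and consequently the symmetric Gauss–Seidel matrix L = B + C D⁻¹ Cᵀ satisfies L ≤ B + N² D. -/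
/-!
Normalise by `D^{-1/2}`: since `B` is positive semidefinite, `B i j ^ 2 ≤ B i i * B j j`, so the
matrix `D^{-1/2} B D^{-1/2}` has unit diagonal and entries of absolute value at most `1`, with the
sparsity pattern of `B`. Because `B = D - C - Cᵀ`, the matrix of the first claim is
`1 - D^{-1/2} B D^{-1/2}`: its diagonal vanishes and each row has at most `N` entries of size at
most `1`, so Gershgorin's theorem bounds its eigenvalues by `N`. The normalised triangular part
`Ĉ = D^{-1/2} C D^{-1/2}` has the same entry bound and at most `N` nonzeros in every row and column,
so by the Schur test `Ĉ Ĉᵀ ≤ N² • 1`; conjugating by `D^{1/2}` gives `C D⁻¹ Cᵀ ≤ N² • D`.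
-/

open Matrix Finset

namespace Matrix

variable {ι : Type*}

theorem PosSemidef.sq_apply_le {B : Matrix ι ι ℝ} (hB : B.PosSemidef) (i j : ι) :
    B i j ^ 2 ≤ B i i * B j j := by
  have hdet := (hB.submatrix ![i, j]).det_nonneg
  have hsymm : B j i = B i j := by simpa using hB.1.apply i j
  simp only [det_fin_two, submatrix_apply, cons_val_zero, cons_val_one, hsymm] at hdet
  linarith

theorem PosSemidef.abs_apply_le_sqrt_mul_sqrt {B : Matrix ι ι ℝ} (hB : B.PosSemidef) (i j : ι) :
    |B i j| ≤ √(B i i) * √(B j j) := by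
  rw [← Real.sqrt_sq_eq_abs, ← Real.sqrt_mul hB.diag_nonneg]
  exact Real.sqrt_le_sqrt (hB.sq_apply_le i j)

theorem apply_eq_zero_or_eq_neg_of_eq_sub_sub {R : Type*} [AddGroup R] [LinearOrder ι]
    {B C D : Matrix ι ι R} (hD : D.IsDiag) (hClow : ∀ i j, i ≤ j → C i j = 0)
    (hdec : B = D - C - Cᵀ) (i j : ι) : C i j = 0 ∨ C i j = -B i j := by
  rcases le_or_gt i j with hij | hji
  · exact Or.inl (hClow i j hij)
  · right
    rw [hdec]
    simp [hD hji.ne', hClow j i hji.le]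

theorem sum_abs_apply_le_of_abs_apply_le_one {m n : Type*} [Fintype n] {A P : Matrix m n ℝ}
    {N : ℕ} (hA : ∀ i j, |A i j| ≤ 1) (hAP : ∀ i j, A i j ≠ 0 → P i j ≠ 0)
    (hP : ∀ i, #{j | P i j ≠ 0} ≤ N) (i : m) : ∑ j, |A i j| ≤ N :=
  calc ∑ j, |A i j| = ∑ j ∈ {j | P i j ≠ 0}, |A i j| := by
        refine (sum_subset (subset_univ _) fun j _ hj => ?_).symm
        rw [not_imp_comm.1 (hAP i j) (by simpa using hj), abs_zero]
    _ ≤ #{j | P i j ≠ 0} • (1 : ℝ) := sum_le_card_nsmul _ _ _ fun j _ => hA i j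
    _ ≤ N := by simpa using hP i

theorem abs_le_of_hasEigenvalue_of_diag_eq_zero [Fintype ι] [DecidableEq ι] {A : Matrix ι ι ℝ}
    {r : ℝ} (hdiag : ∀ k, A k k = 0) (hrow : ∀ k, ∑ j, |A k j| ≤ r) {μ : ℝ}
    (hμ : Module.End.HasEigenvalue (toLin' A) μ) : |μ| ≤ r := by
  obtain ⟨k, hk⟩ := eigenvalue_mem_ball hμ
  rw [Metric.mem_closedBall, hdiag, Real.dist_eq, sub_zero] at hk
  refine hk.trans ((sum_le_sum_of_subset_of_nonneg (erase_subset k univ)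
    fun _ _ _ => norm_nonneg _).trans ?_)
  simpa only [Real.norm_eq_abs] using hrow k

section SchurTest

variable {m n : Type*} [Fintype m] [Fintype n]

theorem dotProduct_mulVec_self_le_of_sum_abs_le (M : Matrix m n ℝ) {r c : ℝ} (hr : 0 ≤ r)
    (hrow : ∀ i, ∑ j, |M i j| ≤ r) (hcol : ∀ j, ∑ i, |M i j| ≤ c) (x : n → ℝ) :
    M *ᵥ x ⬝ᵥ M *ᵥ x ≤ r * c * (x ⬝ᵥ x) := by
  have hsq (i : m) : (M *ᵥ x) i ^ 2 ≤ r * ∑ j, |M i j| * x j ^ 2 :=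
    calc (M *ᵥ x) i ^ 2 ≤ (∑ j, |M i j| * |x j|) ^ 2 := by
          rw [← sq_abs]
          gcongr
          simpa only [mulVec, dotProduct, abs_mul] using
            abs_sum_le_sum_abs (fun j => M i j * x j) univ
      _ ≤ (∑ j, |M i j|) * ∑ j, |M i j| * x j ^ 2 :=
          sum_sq_le_sum_mul_sum_of_sq_le_mul _ (fun _ _ => abs_nonneg _)
            (fun _ _ => by positivity) fun j _ => le_of_eq (by rw [mul_pow, sq_abs (x j)]; ring)
      _ ≤ r * ∑ j, |M i j| * x j ^ 2 := by gcongr; exact hrow i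
  calc M *ᵥ x ⬝ᵥ M *ᵥ x = ∑ i, (M *ᵥ x) i ^ 2 := by simp only [dotProduct, sq]
    _ ≤ ∑ i, r * ∑ j, |M i j| * x j ^ 2 := sum_le_sum fun i _ => hsq i
    _ = r * ∑ j, x j ^ 2 * ∑ i, |M i j| := by
        rw [← mul_sum, sum_comm]
        simp only [mul_sum, mul_comm]
    _ ≤ r * ∑ j, x j ^ 2 * c := by gcongr with j; exact hcol j
    _ = r * c * (x ⬝ᵥ x) := by simp only [dotProduct, ← sum_mul, sq]; ring

theorem posSemidef_smul_one_sub_mul_transpose [DecidableEq m] (M : Matrix m n ℝ) {r c : ℝ}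
    (hc : 0 ≤ c) (hrow : ∀ i, ∑ j, |M i j| ≤ r) (hcol : ∀ j, ∑ i, |M i j| ≤ c) :
    ((r * c) • 1 - M * Mᵀ).PosSemidef := by
  refine .of_dotProduct_mulVec_nonneg ?_ fun x => ?_
  · simp [IsHermitian, conjTranspose_eq_transpose_of_trivial, transpose_sub]
  · have := Mᵀ.dotProduct_mulVec_self_le_of_sum_abs_le hc hcol hrow x
    rw [star_trivial, sub_mulVec, dotProduct_sub, smul_mulVec, one_mulVec, dotProduct_smul,
      ← mulVec_mulVec, dotProduct_mulVec, ← mulVec_transpose, smul_eq_mul]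
    linarith

end SchurTest

section DiagonalScaling

variable [DecidableEq ι] {B : Matrix ι ι ℝ}

noncomputable def sqrtDiag (B : Matrix ι ι ℝ) : Matrix ι ι ℝ := diagonal fun i => √(B i i)

noncomputable def invSqrtDiag (B : Matrix ι ι ℝ) : Matrix ι ι ℝ :=
  diagonal fun i => (√(B i i))⁻¹

@[simp]
theorem conjTranspose_sqrtDiag : (sqrtDiag B)ᴴ = sqrtDiag B := by
  simp [sqrtDiag]

@[simp]
theorem transpose_invSqrtDiag : (invSqrtDiag B)ᵀ = invSqrtDiag B := diagonal_transpose _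

variable [Fintype ι]

theorem sqrtDiag_mul_self (hB : ∀ i, 0 ≤ B i i) :
    sqrtDiag B * sqrtDiag B = diagonal B.diag := by
  rw [sqrtDiag, diagonal_mul_diagonal]
  exact congrArg _ (funext fun i => Real.mul_self_sqrt (hB i))

theorem sqrtDiag_mul_invSqrtDiag (hB : ∀ i, 0 < B i i) : sqrtDiag B * invSqrtDiag B = 1 := by
  rw [sqrtDiag, invSqrtDiag, diagonal_mul_diagonal, ← diagonal_one]
  exact congrArg _ (funext fun i => mul_inv_cancel₀ (Real.sqrt_pos.2 (hB i)).ne')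

theorem invSqrtDiag_mul_sqrtDiag (hB : ∀ i, 0 < B i i) : invSqrtDiag B * sqrtDiag B = 1 := by
  rw [sqrtDiag, invSqrtDiag, diagonal_mul_diagonal, ← diagonal_one]
  exact congrArg _ (funext fun i => inv_mul_cancel₀ (Real.sqrt_pos.2 (hB i)).ne')

theorem invSqrtDiag_mul_mul_invSqrtDiag_apply (A : Matrix ι ι ℝ) (i j : ι) :
    (invSqrtDiag B * A * invSqrtDiag B) i j = A i j / (√(B i i) * √(B j j)) := by
  rw [invSqrtDiag, mul_diagonal, diagonal_mul, div_eq_mul_inv, mul_inv]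
  ring

theorem PosSemidef.abs_invSqrtDiag_mul_mul_invSqrtDiag_apply_le_one (hB : B.PosSemidef)
    (i j : ι) : |(invSqrtDiag B * B * invSqrtDiag B) i j| ≤ 1 := by
  rw [invSqrtDiag_mul_mul_invSqrtDiag_apply, abs_div,
    abs_of_nonneg (a := √(B i i) * √(B j j)) (by positivity)]
  exact div_le_one_of_le₀ (hB.abs_apply_le_sqrt_mul_sqrt i j) (by positivity)

theorem PosDef.invSqrtDiag_mul_mul_invSqrtDiag_apply_self (hB : B.PosDef) (i : ι) :
    (invSqrtDiag B * B * invSqrtDiag B) i i = 1 := by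
  rw [invSqrtDiag_mul_mul_invSqrtDiag_apply, Real.mul_self_sqrt hB.diag_pos.le,
    div_self hB.diag_pos.ne']

theorem invSqrtDiag_mul_mul_invSqrtDiag_add_transpose (hB : ∀ i, 0 < B i i)
    {C : Matrix ι ι ℝ} (hdec : B = diagonal B.diag - C - Cᵀ) :
    invSqrtDiag B * C * invSqrtDiag B + (invSqrtDiag B * C * invSqrtDiag B)ᵀ =
      1 - invSqrtDiag B * B * invSqrtDiag B := by
  have hCCT : C + Cᵀ = diagonal B.diag - B := by
    rw [sub_sub, eq_sub_iff_add_eq, add_comm, ← eq_sub_iff_add_eq] at hdec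
    exact hdec
  calc _ = invSqrtDiag B * (C + Cᵀ) * invSqrtDiag B := by
        simp only [transpose_mul, transpose_invSqrtDiag, Matrix.mul_add, Matrix.add_mul,
          Matrix.mul_assoc]
    _ = invSqrtDiag B * sqrtDiag B * (sqrtDiag B * invSqrtDiag B) -
          invSqrtDiag B * B * invSqrtDiag B := by
        rw [hCCT, ← sqrtDiag_mul_self fun i => (hB i).le, Matrix.mul_sub, Matrix.sub_mul]
        simp only [Matrix.mul_assoc]
    _ = 1 - invSqrtDiag B * B * invSqrtDiag B := by
        rw [invSqrtDiag_mul_sqrtDiag hB, sqrtDiag_mul_invSqrtDiag hB, Matrix.one_mul]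

theorem smul_diagonal_sub_mul_inv_mul_transpose (hB : ∀ i, 0 < B i i) (C : Matrix ι ι ℝ)
    (r : ℝ) : r • diagonal B.diag - C * (diagonal B.diag)⁻¹ * Cᵀ =
      sqrtDiag B * (r • 1 - (invSqrtDiag B * C * invSqrtDiag B) *
        (invSqrtDiag B * C * invSqrtDiag B)ᵀ) * sqrtDiag B := by
  have hinv : (diagonal B.diag)⁻¹ = invSqrtDiag B * invSqrtDiag B := by
    rw [← sqrtDiag_mul_self fun i => (hB i).le]
    refine inv_eq_left_inv ?_
    rw [Matrix.mul_assoc, ← Matrix.mul_assoc _ (sqrtDiag B), invSqrtDiag_mul_sqrtDiag hB,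
      Matrix.one_mul, invSqrtDiag_mul_sqrtDiag hB]
  rw [hinv, ← sqrtDiag_mul_self fun i => (hB i).le]
  simp only [transpose_mul, transpose_invSqrtDiag, Matrix.mul_sub, Matrix.sub_mul,
    Matrix.mul_smul, Matrix.smul_mul, Matrix.mul_one, Matrix.mul_assoc]
  rw [invSqrtDiag_mul_sqrtDiag hB, Matrix.mul_one, ← Matrix.mul_assoc (sqrtDiag B),
    sqrtDiag_mul_invSqrtDiag hB, Matrix.one_mul]

end DiagonalScaling

variable [Fintype ι] [DecidableEq ι] {B : Matrix ι ι ℝ} {N : ℕ}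

theorem PosDef.abs_le_of_hasEigenvalue_one_sub_invSqrtDiag_mul_mul_invSqrtDiag
    (hB : B.PosDef) (hsparse : ∀ i, #{j | B i j ≠ 0} ≤ N) {μ : ℝ}
    (hμ : Module.End.HasEigenvalue (toLin' (1 - invSqrtDiag B * B * invSqrtDiag B)) μ) :
    |μ| ≤ N := by
  have hdiag (k : ι) : (invSqrtDiag B * B * invSqrtDiag B) k k = 1 :=
    hB.invSqrtDiag_mul_mul_invSqrtDiag_apply_self k
  refine abs_le_of_hasEigenvalue_of_diag_eq_zero (fun k => by simp [hdiag])
    (sum_abs_apply_le_of_abs_apply_le_one (fun k j => ?_) (fun k j => ?_) hsparse) hμ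
  all_goals obtain rfl | hkj := eq_or_ne k j
  · simp [hdiag]
  · simpa [one_apply_ne hkj] using
      hB.posSemidef.abs_invSqrtDiag_mul_mul_invSqrtDiag_apply_le_one k j
  · simp [hdiag]
  · intro h hBkj
    simp [one_apply_ne hkj, invSqrtDiag_mul_mul_invSqrtDiag_apply, hBkj] at h

theorem PosDef.posSemidef_sq_smul_diagonal_sub_mul_inv_mul_transpose [LinearOrder ι]
    {C : Matrix ι ι ℝ} (hB : B.PosDef) (hsparse : ∀ i, #{j | B i j ≠ 0} ≤ N)
    (hClow : ∀ i j, i ≤ j → C i j = 0) (hdec : B = diagonal B.diag - C - Cᵀ) :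
    ((N : ℝ) ^ 2 • diagonal B.diag - C * (diagonal B.diag)⁻¹ * Cᵀ).PosSemidef := by
  set Cn := invSqrtDiag B * C * invSqrtDiag B
  have hCn (i j : ι) : Cn i j = 0 ∨ Cn i j = -(invSqrtDiag B * B * invSqrtDiag B) i j := by
    simp only [Cn, invSqrtDiag_mul_mul_invSqrtDiag_apply]
    rcases apply_eq_zero_or_eq_neg_of_eq_sub_sub (isDiag_diagonal _) hClow hdec i j with h | h <;>
      simp [h, neg_div]
  have hCn_le (i j : ι) : |Cn i j| ≤ 1 := by
    rcases hCn i j with h | h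
    · simp [h]
    · simpa [h] using hB.posSemidef.abs_invSqrtDiag_mul_mul_invSqrtDiag_apply_le_one i j
  have hCn_ne (i j : ι) (h : Cn i j ≠ 0) : B i j ≠ 0 := by
    intro hBij
    rcases hCn i j with h' | h' <;> simp [h', invSqrtDiag_mul_mul_invSqrtDiag_apply, hBij] at h
  have hsymm (i j : ι) : B j i = B i j := by simpa using hB.1.apply i j
  have hconj := (posSemidef_smul_one_sub_mul_transpose Cn N.cast_nonneg
    (sum_abs_apply_le_of_abs_apply_le_one hCn_le hCn_ne hsparse)
    (sum_abs_apply_le_of_abs_apply_le_one (A := Cnᵀ) (fun j i => hCn_le i j)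
      (fun j i h => hsymm j i ▸ hCn_ne i j h) hsparse)).mul_mul_conjTranspose_same (sqrtDiag B)
  rw [smul_diagonal_sub_mul_inv_mul_transpose fun _ => hB.diag_pos, sq]
  rwa [conjTranspose_sqrtDiag] at hconj

end Matrix

/-- Gershgorin bound for the symmetric Gauss–Seidel preconditioner: if the SPD
matrix `B` has at most `N` nonzero entries per row, `D` is its diagonal and `C`
its strictly lower triangular part, then every eigenvalue of
`D^{−1/2}CD^{−1/2} + D^{−1/2}CᵀD^{−1/2}` is at most `N` in absolute value, and
`L = B + C D⁻¹ Cᵀ ≤ B + N² D` in the Loewner order. -/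
theorem stmt_10 {n : ℕ} (N : ℕ) (B D C : Matrix (Fin n) (Fin n) ℝ)
    (hB : B.PosDef)
    (hsparse : ∀ i : Fin n, (Finset.univ.filter (fun j => B i j ≠ 0)).card ≤ N)
    (hD : D = Matrix.diagonal (fun i => B i i))
    (hClow : ∀ i j : Fin n, i ≤ j → C i j = 0)
    (hdec : B = D - C - Cᵀ)
    (Dnh : Matrix (Fin n) (Fin n) ℝ)
    (hDnh : Dnh = Matrix.diagonal (fun i => (Real.sqrt (B i i))⁻¹)) :
    (∀ μ : ℝ, Module.End.HasEigenvalue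
        (Matrix.toLin' (Dnh * C * Dnh + (Dnh * C * Dnh)ᵀ)) μ → |μ| ≤ (N : ℝ)) ∧
    ((B + (N : ℝ)^2 • D) - (B + C * D⁻¹ * Cᵀ)).PosSemidef := by
  have hD' : D = diagonal B.diag := hD
  have hDnh' : Dnh = invSqrtDiag B := hDnh
  subst hD' hDnh'
  refine ⟨fun μ hμ => ?_, ?_⟩
  · rw [invSqrtDiag_mul_mul_invSqrtDiag_add_transpose (fun _ => hB.diag_pos) hdec] at hμ
    exact hB.abs_le_of_hasEigenvalue_one_sub_invSqrtDiag_mul_mul_invSqrtDiag hsparse hμ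
  · rw [add_sub_add_left_eq_sub]
    exact hB.posSemidef_sq_smul_diagonal_sub_mul_inv_mul_transpose hsparse hClow hdec
end

section
/- Let H be an inner product space with seminorm |·| and V a finite-dimensional subspace with two projections onto V: Π minimizing |·| (i.e., |u − Πu| ≤ |u − v| for all v ∈ V) and Q the L²-orthogonal projection onto V with respect to a second norm ‖·‖₀. Suppose the inverse inequality |v| ≤ γ ‖v‖₀ holds for all v ∈ V and the approximation estimates ‖u − Πu‖₀ ≤ δ |u| and ‖u − Qu‖₀ ≤ δ |u| hold with γδ ≤ c₀. Then |Qu| ≤ (1 + 2c₀)|u| for all u. -/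
section Aux

variable {H : Type*} [AddCommGroup H] [Module ℝ H]
  (a : H →ₗ[ℝ] H →ₗ[ℝ] ℝ)

lemma aux_cs (hasymm : ∀ x y, a x y = a y x) (hapos : ∀ x, 0 ≤ a x x)
    (x y : H) : (a x y) ^ 2 ≤ a x x * a y y := by
  have key : ∀ t : ℝ, 0 ≤ a y y * (t * t) + (2 * a x y) * t + a x x := by
    intro t
    have := hapos (x + t • y)
    simp only [map_add, map_smul, LinearMap.add_apply, LinearMap.smul_apply,
      smul_eq_mul] at this
    rw [hasymm y x] at this
    nlinarith [this]
  have hd := discrim_le_zero key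
  unfold discrim at hd
  nlinarith

lemma aux_tri (hasymm : ∀ x y, a x y = a y x) (hapos : ∀ x, 0 ≤ a x x)
    (x y : H) : Real.sqrt (a (x + y) (x + y)) ≤
      Real.sqrt (a x x) + Real.sqrt (a y y) := by
  have hcs := aux_cs a hasymm hapos x y
  have h1 : a x y ≤ Real.sqrt (a x x) * Real.sqrt (a y y) := by
    have h2 : a x y ≤ Real.sqrt ((a x y) ^ 2) := by
      rw [Real.sqrt_sq_eq_abs]; exact le_abs_self _
    calc a x y ≤ Real.sqrt ((a x y) ^ 2) := h2
      _ ≤ Real.sqrt (a x x * a y y) := Real.sqrt_le_sqrt hcs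
      _ = Real.sqrt (a x x) * Real.sqrt (a y y) := Real.sqrt_mul (hapos x) _
  have hexp : a (x + y) (x + y) ≤ (Real.sqrt (a x x) + Real.sqrt (a y y)) ^ 2 := by
    have e1 : a (x + y) (x + y) = a x x + 2 * a x y + a y y := by
      simp only [map_add, LinearMap.add_apply]
      nlinarith [hasymm x y]
    have sx := Real.sq_sqrt (hapos x)
    have sy := Real.sq_sqrt (hapos y)
    nlinarith
  calc Real.sqrt (a (x + y) (x + y))
      ≤ Real.sqrt ((Real.sqrt (a x x) + Real.sqrt (a y y)) ^ 2) :=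
        Real.sqrt_le_sqrt hexp
    _ = Real.sqrt (a x x) + Real.sqrt (a y y) := by
        rw [Real.sqrt_sq (by positivity)]

end Aux

/-- Stability of the `L²`-projection `Q` in the energy seminorm
`|u| = √(a(u,u))`: if `Π` is the `a`-orthogonal (energy-minimizing) projection
onto the subspace `V` (expressed through Galerkin orthogonality `hGal`), the
inverse inequality `|v| ≤ γ‖v‖₀` holds on `V`, and both projections satisfy the
approximation estimates `‖u − Πu‖₀ ≤ δ|u|`, `‖u − Qu‖₀ ≤ δ|u|` with `γδ ≤ c₀`,
then `|Qu| ≤ (1 + 2c₀)|u|`. -/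
theorem stmt_14 {H : Type*} [AddCommGroup H] [Module ℝ H] (V : Submodule ℝ H)
    (a : H →ₗ[ℝ] H →ₗ[ℝ] ℝ)
    (hasymm : ∀ x y, a x y = a y x) (hapos : ∀ x, 0 ≤ a x x)
    (q : H → ℝ) (hq0 : ∀ x, 0 ≤ q x) (hqtri : ∀ x y, q (x + y) ≤ q x + q y)
    (hqneg : ∀ x, q (-x) = q x)
    (Pi Q : H →ₗ[ℝ] H) (hPiV : ∀ u, Pi u ∈ V) (hQV : ∀ u, Q u ∈ V)
    (hGal : ∀ u, ∀ v ∈ V, a (u - Pi u) v = 0)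
    (γ δ c₀ : ℝ) (hγ : 0 ≤ γ) (hδ : 0 ≤ δ) (hγδ : γ * δ ≤ c₀)
    (hinv : ∀ v ∈ V, Real.sqrt (a v v) ≤ γ * q v)
    (happPi : ∀ u, q (u - Pi u) ≤ δ * Real.sqrt (a u u))
    (happQ : ∀ u, q (u - Q u) ≤ δ * Real.sqrt (a u u)) :
    ∀ u, Real.sqrt (a (Q u) (Q u)) ≤ (1 + 2 * c₀) * Real.sqrt (a u u) := by
  intro u
  set s := Real.sqrt (a u u) with hs
  have hs0 : 0 ≤ s := Real.sqrt_nonneg _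
  -- |Πu| ≤ |u|
  have hPile : Real.sqrt (a (Pi u) (Pi u)) ≤ s := by
    apply Real.sqrt_le_sqrt
    have h1 := hGal u (Pi u) (hPiV u)
    have h2 := hapos (u - Pi u)
    have e1 : a (u - Pi u) (Pi u) = 0 := h1
    have e2 : a (u - Pi u) (u - Pi u) =
        a u u - 2 * a (u - Pi u) (Pi u) - a (Pi u) (Pi u) := by
      simp only [map_sub, LinearMap.sub_apply]
      nlinarith [hasymm u (Pi u), hasymm (Pi u) u]
    nlinarith
  -- |Qu − Πu| ≤ 2 c₀ |u|
  have hw : Real.sqrt (a (Q u - Pi u) (Q u - Pi u)) ≤ 2 * c₀ * s := by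
    have hmem : Q u - Pi u ∈ V := V.sub_mem (hQV u) (hPiV u)
    have h1 := hinv _ hmem
    have h2 : q (Q u - Pi u) ≤ q (u - Q u) + q (u - Pi u) := by
      have e : Q u - Pi u = -(u - Q u) + (u - Pi u) := by abel
      calc q (Q u - Pi u) = q (-(u - Q u) + (u - Pi u)) := by rw [e]
        _ ≤ q (-(u - Q u)) + q (u - Pi u) := hqtri _ _
        _ = q (u - Q u) + q (u - Pi u) := by rw [hqneg]
    have h3 : q (Q u - Pi u) ≤ 2 * δ * s := by
      have := happPi u
      have := happQ u
      linarith
    calc Real.sqrt (a (Q u - Pi u) (Q u - Pi u)) ≤ γ * q (Q u - Pi u) := h1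
      _ ≤ γ * (2 * δ * s) := by
          exact mul_le_mul_of_nonneg_left h3 hγ
      _ = 2 * (γ * δ) * s := by ring
      _ ≤ 2 * c₀ * s := by nlinarith
  have htri : Real.sqrt (a (Q u) (Q u)) ≤
      Real.sqrt (a (Pi u) (Pi u)) + Real.sqrt (a (Q u - Pi u) (Q u - Pi u)) := by
    have e : Q u = Pi u + (Q u - Pi u) := by abel
    calc Real.sqrt (a (Q u) (Q u))
        = Real.sqrt (a (Pi u + (Q u - Pi u)) (Pi u + (Q u - Pi u))) := by rw [← e]
      _ ≤ _ := aux_tri a hasymm hapos _ _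
  calc Real.sqrt (a (Q u) (Q u)) ≤ s + 2 * c₀ * s := by linarith
    _ = (1 + 2 * c₀) * s := by ring
end
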